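/- Let A be a finitely generated commutative ℤ-algebra that is an integral domain, and let 𝔪 be a maximal ideal of A. Then the residue field A/𝔪 is finite. -/

import Mathlib

lemma aux_isJacobsonRing_int : IsJacobsonRing ℤ := by
  rw [isJacobsonRing_iff_prime_eq]
  intro P hP
  rcases eq_or_ne P ⊥ with rfl | hne
  · refine eq_bot_iff.mpr fun x hx => ?_
    have h1 := (Ideal.mem_jacobson_bot.mp hx) 1
    have h2 := (Ideal.mem_jacobson_bot.mp hx) (-1)
    rw [mul_one] at h1
    rw [Int.isUnit_iff] at h1 h2
    simp only [Ideal.mem_bot]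
    omega
  · exact Ideal.jacobson_eq_self_of_isMaximal (H := hP.isMaximal hne)

/-- Nullstellensatz over ℤ: the residue field at a maximal ideal of a finitely
generated ℤ-algebra which is an integral domain is finite. -/
theorem stmt_7 (A : Type*) [CommRing A] [IsDomain A]
    (hfg : Algebra.FiniteType ℤ A) (𝔪 : Ideal A) (h𝔪 : 𝔪.IsMaximal) :
    Finite (A ⧸ 𝔪) := by
  let K := A ⧸ 𝔪
  letI : Field K := Ideal.Quotient.field 𝔪
  haveI : IsJacobsonRing ℤ := aux_isJacobsonRing_int
  haveI : Algebra.FiniteType ℤ K :=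
    Algebra.FiniteType.trans hfg (Algebra.FiniteType.of_surjective
      (Algebra.ofId A K) Ideal.Quotient.mk_surjective)
  haveI : Module.Finite ℤ K := finite_of_finite_type_of_isJacobsonRing ℤ K
  haveI : Algebra.IsIntegral ℤ K := Algebra.IsIntegral.of_finite ℤ K
  obtain ⟨p, hp⟩ := CharP.exists K
  rcases Nat.eq_zero_or_pos p with h0 | hpos
  · exfalso
    subst h0
    haveI : CharZero K := CharP.charP_to_charZero K
    have hinj : Function.Injective (algebraMap ℤ K) :=
      fun a b h => by exact_mod_cast (by simpa using h : (a : K) = b)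
    have : IsField ℤ :=
      (Algebra.IsIntegral.isField_iff_isField hinj).mpr (Field.toIsField K)
    exact Int.not_isField this
  · haveI : NeZero p := ⟨hpos.ne'⟩
    haveI : Fact p.Prime := ⟨CharP.char_is_prime_of_pos K p |>.out⟩
    letI : Algebra (ZMod p) K := ZMod.algebra K p
    haveI : Module.Finite (ZMod p) K := Module.Finite.of_restrictScalars_finite ℤ (ZMod p) K
    exact Module.finite_of_finite (ZMod p)
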